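/- arXiv:1212.4205 — 4 statements merged into one kernel-verified Lean document; each statement's English description precedes it below -/
import Mathlib

section
/- For every finite complex linear combination f = ∑_{k=1}^m α_k f^k of superprojective systems of L² functions (α_k ∈ ℂ), there exist superprojective systems f¹, f², f³, f⁴ such that f_n = f¹_n − f²_n + i(f³_n − f⁴_n) in L²(ℝⁿ) for every n. -/
open MeasureTheory Filter Topology Real

noncomputable section

/-- A superprojective system of L² functions: `F n` plays the role of the paper's `f_{n+1}`,
a nonnegative element of `L²(ℝ^{n+1})`, and
`∫_ℝ |f_{n+1}(x,x')|² dx' ≤ |f_n(x)|²` for a.e. `x ∈ ℝⁿ`. -/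
def IsSPS (F : ∀ n : ℕ, (Fin (n + 1) → ℝ) → ℝ) : Prop :=
  (∀ n, MemLp (F n) 2 (volume : Measure (Fin (n + 1) → ℝ))) ∧
  (∀ n, ∀ᵐ x : Fin (n + 1) → ℝ, 0 ≤ F n x) ∧
  (∀ n, ∀ᵐ x : Fin (n + 1) → ℝ,
    (∫ t : ℝ, F (n + 1) (Fin.snoc x t) ^ 2) ≤ F n x ^ 2)

/-!
Write each coefficient as `α = (re⁺ - re⁻) + i (im⁺ - im⁻)` with four nonnegative reals, and
group the terms accordingly. It remains to see that nonnegative combinations `∑ c_k f^k` of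
superprojective systems are superprojective. By Fubini, for a.e. `x` every slice
`t ↦ f^k_{n+1}(x, t)` lies in `L²(ℝ)`, and Minkowski's inequality in `L²(ℝ)` gives
`‖∑ c_k f^k_{n+1}(x, ·)‖₂ ≤ ∑ c_k ‖f^k_{n+1}(x, ·)‖₂ ≤ ∑ c_k f^k_n(x)`.
-/

section
variable {α : Type*} [MeasurableSpace α] {μ : Measure α}

lemma integral_sq_eq_toReal_eLpNorm_sq {f : α → ℝ} (hf : MemLp f 2 μ) :
    ∫ a, f a ^ 2 ∂μ = (eLpNorm f 2 μ).toReal ^ 2 := by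
  have h := real_inner_self_eq_norm_sq (hf.toLp f)
  rw [L2.inner_def, Lp.norm_toLp] at h
  rw [← h]
  refine integral_congr_ae ?_
  filter_upwards [hf.coeFn_toLp] with a ha
  simp [ha, sq]

lemma eLpNorm_two_le_ofReal_iff {f : α → ℝ} (hf : MemLp f 2 μ) {r : ℝ} (hr : 0 ≤ r) :
    eLpNorm f 2 μ ≤ ENNReal.ofReal r ↔ ∫ a, f a ^ 2 ∂μ ≤ r ^ 2 := by
  rw [ENNReal.le_ofReal_iff_toReal_le hf.2.ne hr, integral_sq_eq_toReal_eLpNorm_sq hf,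
    pow_le_pow_iff_left₀ ENNReal.toReal_nonneg hr two_ne_zero]

lemma integral_sum_mul_sq_le {ι : Type*} {s : Finset ι} {c r : ι → ℝ} {g : ι → α → ℝ}
    (hg : ∀ k ∈ s, MemLp (g k) 2 μ) (hc : ∀ k ∈ s, 0 ≤ c k) (hr : ∀ k ∈ s, 0 ≤ r k)
    (hgr : ∀ k ∈ s, ∫ a, g k a ^ 2 ∂μ ≤ r k ^ 2) :
    ∫ a, (∑ k ∈ s, c k * g k a) ^ 2 ∂μ ≤ (∑ k ∈ s, c k * r k) ^ 2 := by
  have hcg : ∀ k ∈ s, MemLp (c k • g k) 2 μ := fun k hk => (hg k hk).const_smul (c k)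
  have hsum : MemLp (∑ k ∈ s, c k • g k) 2 μ := memLp_finsetSum' s hcg
  have hcr : 0 ≤ ∑ k ∈ s, c k * r k :=
    Finset.sum_nonneg fun k hk => mul_nonneg (hc k hk) (hr k hk)
  have key := (eLpNorm_two_le_ofReal_iff hsum hcr).1 <| calc
    eLpNorm (∑ k ∈ s, c k • g k) 2 μ ≤ ∑ k ∈ s, eLpNorm (c k • g k) 2 μ :=
      eLpNorm_sum_le (fun k hk => (hcg k hk).1) one_le_two
    _ ≤ ∑ k ∈ s, ENNReal.ofReal (c k * r k) := Finset.sum_le_sum fun k hk => by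
      rw [eLpNorm_const_smul, ENNReal.ofReal_mul (hc k hk), Real.enorm_eq_ofReal (hc k hk)]
      gcongr
      exact (eLpNorm_two_le_ofReal_iff (hg k hk) (hr k hk)).2 (hgr k hk)
    _ = ENNReal.ofReal (∑ k ∈ s, c k * r k) :=
      (ENNReal.ofReal_sum_of_nonneg fun k hk => mul_nonneg (hc k hk) (hr k hk)).symm
  simpa [Finset.sum_apply] using key

end

lemma measurePreserving_snoc (n : ℕ) :
    MeasurePreserving (fun z : (Fin n → ℝ) × ℝ => (Fin.snoc z.1 z.2 : Fin (n + 1) → ℝ)) := by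
  have h := ((volume_preserving_piFinSuccAbove (fun _ : Fin (n + 1) => ℝ) (Fin.last n)).symm
    _).comp (Measure.measurePreserving_swap (μ := (volume : Measure (Fin n → ℝ)))
      (ν := (volume : Measure ℝ)))
  convert h using 1
  · funext z
    simp [MeasurableEquiv.piFinSuccAbove_symm_apply, Fin.insertNthEquiv, Fin.insertNth_last']
  · rfl

lemma MeasureTheory.MemLp.ae_memLp_snoc {n : ℕ} {h : (Fin (n + 1) → ℝ) → ℝ} (hh : MemLp h 2) :
    ∀ᵐ x : Fin n → ℝ, MemLp (fun t => h (Fin.snoc x t)) 2 := by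
  have hH : MemLp (fun z : (Fin n → ℝ) × ℝ => h (Fin.snoc z.1 z.2)) 2
      ((volume : Measure (Fin n → ℝ)).prod volume) :=
    hh.comp_measurePreserving (measurePreserving_snoc n)
  filter_upwards [hH.integrable_sq.prod_right_ae, hH.1.prodMk_left] with x hsq hmeas
  exact (memLp_two_iff_integrable_sq hmeas).2 hsq

lemma IsSPS.sum_mul {ι : Type*} (s : Finset ι) {c : ι → ℝ} (hc : ∀ k ∈ s, 0 ≤ c k)
    {F : ι → ∀ n : ℕ, (Fin (n + 1) → ℝ) → ℝ} (hF : ∀ k ∈ s, IsSPS (F k)) :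
    IsSPS (fun n x => ∑ k ∈ s, c k * F k n x) := by
  refine ⟨fun n => ?_, fun n => ?_, fun n => ?_⟩
  · exact memLp_finsetSum s fun k hk => ((hF k hk).1 n).const_mul (c k)
  · filter_upwards [(eventually_all_finset s).2 fun k hk => (hF k hk).2.1 n] with x hx
    exact Finset.sum_nonneg fun k hk => mul_nonneg (hc k hk) (hx k hk)
  · filter_upwards [(eventually_all_finset s).2 fun k hk => ((hF k hk).1 (n + 1)).ae_memLp_snoc,
      (eventually_all_finset s).2 fun k hk => (hF k hk).2.1 n,
      (eventually_all_finset s).2 fun k hk => (hF k hk).2.2 n] with x hslice hpos hle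
    exact integral_sum_mul_sq_le hslice hc hpos hle

lemma Complex.sum_mul_ofReal_eq_posPart_sub_negPart {ι : Type*} (s : Finset ι) (α : ι → ℂ)
    (f : ι → ℝ) :
    ∑ k ∈ s, α k * (f k : ℂ) =
      ((∑ k ∈ s, (α k).re⁺ * f k : ℝ) - (∑ k ∈ s, (α k).re⁻ * f k : ℝ)) +
        I * ((∑ k ∈ s, (α k).im⁺ * f k : ℝ) - (∑ k ∈ s, (α k).im⁻ * f k : ℝ)) := by
  push_cast
  rw [← Finset.sum_sub_distrib, ← Finset.sum_sub_distrib, Finset.mul_sum,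
    ← Finset.sum_add_distrib]
  refine Finset.sum_congr rfl fun k _ => ?_
  conv_lhs => rw [← re_add_im (α k), ← posPart_sub_negPart (α k).re,
    ← posPart_sub_negPart (α k).im]
  push_cast
  ring

/-- Every finite complex linear combination `f = ∑ α_k f^k` of superprojective systems can
be written as `f = f¹ - f² + i (f³ - f⁴)` (in `L²(ℝⁿ)`, i.e. a.e., for every `n`) with
`f¹, f², f³, f⁴` superprojective systems. -/
theorem decomposition_of_combination (m : ℕ) (α : Fin m → ℂ)
    (F : Fin m → ∀ n : ℕ, (Fin (n + 1) → ℝ) → ℝ) (hF : ∀ k, IsSPS (F k)) :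
    ∃ G : Fin 4 → ∀ n : ℕ, (Fin (n + 1) → ℝ) → ℝ,
      (∀ j, IsSPS (G j)) ∧
      ∀ n, ∀ᵐ x : Fin (n + 1) → ℝ,
        (∑ k, α k * (F k n x : ℂ)) =
          ((G 0 n x : ℂ) - G 1 n x) + Complex.I * ((G 2 n x : ℂ) - G 3 n x) := by
  let comb (c : Fin m → ℝ) : ∀ n : ℕ, (Fin (n + 1) → ℝ) → ℝ := fun n x => ∑ k, c k * F k n x
  have hcomb (c : Fin m → ℝ) (hc : ∀ k, 0 ≤ c k) : IsSPS (comb c) :=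
    IsSPS.sum_mul _ (fun k _ => hc k) fun k _ => hF k
  refine ⟨![comb fun k => (α k).re⁺, comb fun k => (α k).re⁻,
    comb fun k => (α k).im⁺, comb fun k => (α k).im⁻], fun j => ?_,
    fun n => Eventually.of_forall fun x => Complex.sum_mul_ofReal_eq_posPart_sub_negPart _ _ _⟩
  fin_cases j
  exacts [hcomb _ fun k => posPart_nonneg _, hcomb _ fun k => negPart_nonneg _,
    hcomb _ fun k => posPart_nonneg _, hcomb _ fun k => negPart_nonneg _]
end
end

section
/- Let f = {f_n} and g = {g_n} be elements of ℒ²(ℝ^∞). Suppose μ_f and μ_g are finite positive Borel measures on ℝ^ℕ (with the product topology) whose pushforwards under the projection p_n : ℝ^ℕ → ℝⁿ have densities x ↦ lim_{k→∞} ∫_{ℝ^k} |f_{n+k}(x,x')|² dx' and x ↦ lim_{k→∞} ∫_{ℝ^k} |g_{n+k}(x,x')|² dx' with respect to Lebesgue measure, respectively, and suppose ρ is a complex Borel measure on ℝ^ℕ whose pushforward under p_n has density x ↦ lim_{k→∞} ∫_{ℝ^k} f_{n+k}(x,x') \overline{g_{n+k}(x,x')} dx'. Then the total variation measure satisfies |ρ|(E)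 ≤ √(μ_f(E)) · √(μ_g(E)) for every Borel set E ⊆ ℝ^ℕ. -/
open MeasureTheory Filter Topology Real

noncomputable section

/-- The elements of ℒ²(ℝ^∞): finite complex linear combinations of superprojective systems. -/
def InL2 (f : ∀ n : ℕ, (Fin (n + 1) → ℝ) → ℂ) : Prop :=
  ∃ (m : ℕ) (α : Fin m → ℂ) (F : Fin m → ∀ n : ℕ, (Fin (n + 1) → ℝ) → ℝ),
    (∀ k, IsSPS (F k)) ∧ ∀ n x, f n x = ∑ k, α k * (F k n x : ℂ)

/-- Concatenation of `x ∈ ℝ^{n+1}` and `x' ∈ ℝ^k` into a point of `ℝ^{(n+k)+1}`. -/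
def app {n k : ℕ} (x : Fin (n + 1) → ℝ) (x' : Fin k → ℝ) : Fin (n + k + 1) → ℝ :=
  fun i => Fin.append x x' (Fin.cast (by omega) i)

/-- Projection of `ℝ^ℕ` onto the first `n+1` coordinates. -/
def proj (n : ℕ) : (ℕ → ℝ) → (Fin (n + 1) → ℝ) := fun y i => y i

/-- The total variation measure of a complex Borel measure, as a supremum over countable
measurable partitions. -/
def cTV (ρ : ComplexMeasure (ℕ → ℝ)) (E : Set (ℕ → ℝ)) : ENNReal :=
  ⨆ P : {P : ℕ → Set (ℕ → ℝ) //
      (∀ i, MeasurableSet (P i)) ∧ Pairwise (Function.onFun Disjoint P) ∧ (⋃ i, P i) = E},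
    ∑' i, ‖ρ (P.1 i)‖₊

/-!
On a cylinder set `proj n ⁻¹' A` the three measures have densities `a`, `b`, `h` on `ℝ^{n+1}`.
Cauchy–Schwarz on the fibres `x' ↦ f (n + k) (app x x')`, passed to the limit `k → ∞`, gives
`‖h‖ ≤ √a √b` a.e., and Hölder's inequality integrates this to
`‖ρ C‖ ≤ μf(C)^{1/2} μg(C)^{1/2}` for cylinders `C`. The cylinders form an algebra generating the
σ-algebra, hence a dense set for the pseudometric `(s, t) ↦ (μf + μg + |ρ|)(s ∆ t)`, in which
both sides of the bound are continuous; so it holds for every measurable set. Summing it over a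
partition and applying Cauchy–Schwarz for series bounds the total variation.
-/

open ENNReal
open scoped symmDiff

theorem ENNReal.tsum_rpow_half_mul_le {ι : Type*} (a b : ι → ℝ≥0∞) :
    ∑' i, a i ^ (1 / 2 : ℝ) * b i ^ (1 / 2 : ℝ)
      ≤ (∑' i, a i) ^ (1 / 2 : ℝ) * (∑' i, b i) ^ (1 / 2 : ℝ) := by
  rw [ENNReal.tsum_eq_iSup_sum]
  refine iSup_le fun s => ?_
  have hsq : ∀ c : ι → ℝ≥0∞, ∀ i, (c i ^ (1 / 2 : ℝ)) ^ (2 : ℝ) = c i := fun c i => by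
    rw [← ENNReal.rpow_mul]; norm_num
  calc ∑ i ∈ s, a i ^ (1 / 2 : ℝ) * b i ^ (1 / 2 : ℝ)
      ≤ (∑ i ∈ s, a i) ^ (1 / 2 : ℝ) * (∑ i ∈ s, b i) ^ (1 / 2 : ℝ) := by
        simpa only [hsq] using ENNReal.inner_le_Lp_mul_Lq s (fun i => a i ^ (1 / 2 : ℝ))
          (fun i => b i ^ (1 / 2 : ℝ)) Real.HolderConjugate.two_two
    _ ≤ (∑' i, a i) ^ (1 / 2 : ℝ) * (∑' i, b i) ^ (1 / 2 : ℝ) := by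
        gcongr <;> exact ENNReal.sum_le_tsum s

namespace MeasureTheory

variable {α : Type*} [MeasurableSpace α]

theorem norm_integral_mul_conj_le {μ : Measure α} {u v : α → ℂ} (hu : MemLp u 2 μ)
    (hv : MemLp v 2 μ) :
    ‖∫ x, u x * starRingEnd ℂ (v x) ∂μ‖ ≤ √(∫ x, ‖u x‖ ^ 2 ∂μ) * √(∫ x, ‖v x‖ ^ 2 ∂μ) := by
  calc ‖∫ x, u x * starRingEnd ℂ (v x) ∂μ‖ ≤ ∫ x, ‖u x‖ * ‖v x‖ ∂μ := by
        refine (norm_integral_le_integral_norm _).trans_eq ?_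
        simp only [norm_mul, RCLike.norm_conj]
    _ ≤ (∫ x, ‖u x‖ ^ (2 : ℝ) ∂μ) ^ (1 / (2 : ℝ)) * (∫ x, ‖v x‖ ^ (2 : ℝ) ∂μ) ^ (1 / (2 : ℝ)) :=
        integral_mul_norm_le_Lp_mul_Lq Real.HolderConjugate.two_two
          (by simpa using hu) (by simpa using hv)
    _ = √(∫ x, ‖u x‖ ^ 2 ∂μ) * √(∫ x, ‖v x‖ ^ 2 ∂μ) := by
        simp only [Real.sqrt_eq_rpow, Real.rpow_two]

theorem MemLp.ae_memLp_two_prodMk {β E : Type*} [MeasurableSpace β] [NormedAddCommGroup E]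
    {μ : Measure α} {ν : Measure β} [SFinite μ] [SFinite ν] {F : α × β → E}
    (hF : MemLp F 2 (μ.prod ν)) :
    ∀ᵐ x ∂μ, MemLp (fun y => F (x, y)) 2 ν := by
  have hint : Integrable (fun p => ‖F p‖ ^ 2) (μ.prod ν) := hF.integrable_norm_pow two_ne_zero
  filter_upwards [hF.aestronglyMeasurable.prodMk_left, hint.prod_right_ae] with x hmeas hsq
  exact (memLp_two_iff_integrable_sq_norm hmeas).mpr hsq

theorem MemLp.aestronglyMeasurable_integral_sq_norm {β E : Type*} [MeasurableSpace β]
    [NormedAddCommGroup E] {μ : Measure α} {ν : Measure β} [SFinite ν] {F : α × β → E}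
    (hF : MemLp F 2 (μ.prod ν)) :
    AEStronglyMeasurable (fun x => ∫ y, ‖F (x, y)‖ ^ 2 ∂ν) μ :=
  (hF.aestronglyMeasurable.norm.pow 2).integral_prod_right'

theorem enorm_setIntegral_le_of_norm_le_sqrt_mul_sqrt {μ : Measure α} {h : α → ℂ} {a b : α → ℝ}
    (ha : AEMeasurable a μ) (hb : AEMeasurable b μ) (hab : ∀ᵐ x ∂μ, ‖h x‖ ≤ √(a x) * √(b x))
    (s : Set α) :
    ‖∫ x in s, h x ∂μ‖ₑ ≤ (∫⁻ x in s, ENNReal.ofReal (a x) ∂μ) ^ (1 / 2 : ℝ)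
      * (∫⁻ x in s, ENNReal.ofReal (b x) ∂μ) ^ (1 / 2 : ℝ) := by
  have hsqrt : ∀ c : ℝ, ENNReal.ofReal √c = ENNReal.ofReal c ^ (1 / 2 : ℝ) := by
    intro c
    rcases le_or_gt 0 c with hc | hc
    · rw [Real.sqrt_eq_rpow, ENNReal.ofReal_rpow_of_nonneg hc (by norm_num)]
    · rw [Real.sqrt_eq_zero'.mpr hc.le, ENNReal.ofReal_zero, ENNReal.ofReal_of_nonpos hc.le,
        ENNReal.zero_rpow_of_pos (by norm_num)]
  have hsq : ∀ c : ℝ, (ENNReal.ofReal √c) ^ (2 : ℝ) = ENNReal.ofReal c := by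
    intro c; rw [hsqrt, ← ENNReal.rpow_mul]; norm_num
  calc ‖∫ x in s, h x ∂μ‖ₑ ≤ ∫⁻ x in s, ‖h x‖ₑ ∂μ := enorm_integral_le_lintegral_enorm _
    _ ≤ ∫⁻ x in s, ENNReal.ofReal √(a x) * ENNReal.ofReal √(b x) ∂μ := by
        refine lintegral_mono_ae (ae_restrict_of_ae ?_)
        filter_upwards [hab] with x hx
        rw [← ENNReal.ofReal_mul (Real.sqrt_nonneg _), ← ofReal_norm]
        exact ENNReal.ofReal_le_ofReal hx
    _ ≤ (∫⁻ x in s, ENNReal.ofReal √(a x) ^ (2 : ℝ) ∂μ) ^ (1 / (2 : ℝ))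
        * (∫⁻ x in s, ENNReal.ofReal √(b x) ^ (2 : ℝ) ∂μ) ^ (1 / (2 : ℝ)) :=
        ENNReal.lintegral_mul_le_Lp_mul_Lq _ Real.HolderConjugate.two_two
          ha.restrict.sqrt.ennreal_ofReal hb.restrict.sqrt.ennreal_ofReal
    _ = _ := by simp only [hsq, one_div]

instance ComplexMeasure.isFiniteMeasure_variation (ρ : ComplexMeasure α) :
    IsFiniteMeasure ρ.variation := by
  refine isFiniteMeasure_of_le ((ComplexMeasure.re ρ).totalVariation
    + (ComplexMeasure.im ρ).totalVariation) (VectorMeasure.variation_le_of_forall_enorm_le ?_)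
  intro E _
  calc ‖ρ E‖ₑ ≤ ‖(ρ E).re‖ₑ + ‖(ρ E).im‖ₑ := by
        simp only [← ofReal_norm]
        rw [← ENNReal.ofReal_add (norm_nonneg _) (norm_nonneg _)]
        exact ENNReal.ofReal_le_ofReal (Complex.norm_le_abs_re_add_abs_im _)
    _ ≤ _ := add_le_add (SignedMeasure.enorm_le_totalVariation _ E)
        (SignedMeasure.enorm_le_totalVariation _ E)

namespace MeasuredSets

variable {ν : Measure α}

theorem continuous_measure_of_le {μ : Measure α} (h : μ ≤ ν) :
    Continuous fun s : MeasuredSets ν => μ s := by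
  refine continuous_of_le_add_edist 1 one_ne_top fun s t => ?_
  rw [one_mul, ← tsub_le_iff_left]
  calc μ s - μ t ≤ μ ((s : Set α) ∆ t) :=
        le_measure_sdiff.trans (measure_mono Set.subset_union_left)
    _ ≤ edist s t := h _

theorem lipschitzWith_vectorMeasure_of_variation_le {E : Type*} [NormedAddCommGroup E]
    {ρ : VectorMeasure α E} (h : ρ.variation ≤ ν) :
    LipschitzWith 1 fun s : MeasuredSets ν => ρ s := by
  refine LipschitzWith.of_edist_le fun s t => ?_
  have hs := s.2
  have ht := t.2
  have hst : ρ ((s : Set α) \ t) = ρ s - ρ ((s : Set α) ∩ t) := by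
    rw [← Set.sdiff_self_inter]
    exact VectorMeasure.of_sdiff (hs.inter ht) hs Set.inter_subset_left
  have hts : ρ ((t : Set α) \ s) = ρ t - ρ ((s : Set α) ∩ t) := by
    rw [← Set.sdiff_inter_self_eq_sdiff]
    exact VectorMeasure.of_sdiff (hs.inter ht) ht Set.inter_subset_right
  calc edist (ρ s) (ρ t) = ‖ρ ((s : Set α) \ t) - ρ ((t : Set α) \ s)‖ₑ := by
        rw [edist_eq_enorm_sub, hst, hts, sub_sub_sub_cancel_right]
    _ ≤ ρ.variation ((s : Set α) \ t) + ρ.variation ((t : Set α) \ s) :=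
        (enorm_sub_le).trans (add_le_add (ρ.enorm_measure_le_variation _)
          (ρ.enorm_measure_le_variation _))
    _ = ρ.variation ((s : Set α) ∆ t) :=
        (measure_union disjoint_sdiff_sdiff (ht.diff hs)).symm
    _ ≤ edist s t := h _

end MeasuredSets

theorem enorm_apply_le_of_forall_mem_isSetAlgebra {E : Type*} [NormedAddCommGroup E]
    {𝒜 : Set (Set α)} (h𝒜 : IsSetAlgebra 𝒜) (hgen : ‹MeasurableSpace α› = .generateFrom 𝒜)
    {μ ν : Measure α} [IsFiniteMeasure μ] [IsFiniteMeasure ν]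
    {ρ : VectorMeasure α E} [IsFiniteMeasure ρ.variation]
    (h : ∀ s ∈ 𝒜, ‖ρ s‖ₑ ≤ μ s ^ (1 / 2 : ℝ) * ν s ^ (1 / 2 : ℝ))
    {s : Set α} (hs : MeasurableSet s) :
    ‖ρ s‖ₑ ≤ μ s ^ (1 / 2 : ℝ) * ν s ^ (1 / 2 : ℝ) := by
  let m := μ + ν + ρ.variation
  have hdense := dense_of_generateFrom_isSetRing (μ := m) h𝒜.isSetRing
    ⟨{Set.univ}, Set.countable_singleton _, Set.singleton_subset_iff.2 h𝒜.univ_mem, by simp⟩ hgen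
  have hsqrt : ∀ {κ : Measure α}, κ ≤ m →
      Continuous fun t : MeasuredSets m => κ t ^ (1 / 2 : ℝ) := fun hκ =>
    (ENNReal.continuous_rpow_const).comp (MeasuredSets.continuous_measure_of_le hκ)
  let P : MeasuredSets m → Prop := fun t => ‖ρ t‖ₑ ≤ μ t ^ (1 / 2 : ℝ) * ν t ^ (1 / 2 : ℝ)
  have hclosed : IsClosed {t | P t} := by
    refine isClosed_le (continuous_enorm.comp
      (MeasuredSets.lipschitzWith_vectorMeasure_of_variation_le ?_).continuous) ?_
    · exact Measure.le_add_left le_rfl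
    · refine Continuous.ennreal_mul (hsqrt (Measure.le_add_right (Measure.le_add_right le_rfl)))
        (hsqrt (Measure.le_add_right (Measure.le_add_left le_rfl))) (fun t => Or.inr ?_)
        (fun t => Or.inr ?_) <;> exact rpow_ne_top_of_nonneg (by norm_num) (measure_ne_top _ _)
  exact hdense.induction (P := P) (fun t ht => h t ht) hclosed ⟨s, hs⟩

theorem enorm_apply_preimage_le_of_map_eq {X Y : Type*} [MeasurableSpace X] [MeasurableSpace Y]
    {φ : X → Y} (hφ : Measurable φ) {κ : Measure Y} {μ ν : Measure X} {ρ : ComplexMeasure X}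
    {a b : Y → ℝ} {h : Y → ℂ} (ha : AEMeasurable a κ) (hb : AEMeasurable b κ)
    (hab : ∀ᵐ y ∂κ, ‖h y‖ ≤ √(a y) * √(b y))
    (hμ : μ.map φ = κ.withDensity fun y => ENNReal.ofReal (a y))
    (hν : ν.map φ = κ.withDensity fun y => ENNReal.ofReal (b y))
    (hρ : ∀ A, MeasurableSet A → ρ.map φ A = ∫ y in A, h y ∂κ)
    {A : Set Y} (hA : MeasurableSet A) :
    ‖ρ (φ ⁻¹' A)‖ₑ ≤ μ (φ ⁻¹' A) ^ (1 / 2 : ℝ) * ν (φ ⁻¹' A) ^ (1 / 2 : ℝ) := by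
  rw [← VectorMeasure.map_apply ρ hφ hA, hρ A hA, ← Measure.map_apply hφ hA,
    ← Measure.map_apply hφ hA, hμ, hν, withDensity_apply _ hA, withDensity_apply _ hA]
  exact enorm_setIntegral_le_of_norm_le_sqrt_mul_sqrt ha hb hab A

end MeasureTheory


theorem measurable_proj (n : ℕ) : Measurable (proj n) :=
  measurable_pi_lambda _ fun _ => measurable_pi_apply _

theorem exists_eq_proj_preimage_of_mem_measurableCylinders {s : Set (ℕ → ℝ)}
    (hs : s ∈ measurableCylinders fun _ : ℕ => ℝ) :
    ∃ n, ∃ A : Set (Fin (n + 1) → ℝ), MeasurableSet A ∧ s = proj n ⁻¹' A := by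
  simp only [measurableCylinders_nat, Set.mem_iUnion, Set.mem_singleton_iff] at hs
  obtain ⟨n, S, hS, rfl⟩ := hs
  refine ⟨n, (fun x (i : Finset.Iic n) => x ⟨i, Nat.lt_succ_of_le (Finset.mem_Iic.1 i.2)⟩) ⁻¹' S,
    (measurable_pi_lambda _ fun i => measurable_pi_apply _) hS, rfl⟩

theorem measurePreserving_app (n k : ℕ) :
    MeasurePreserving (fun p : (Fin (n + 1) → ℝ) × (Fin k → ℝ) => app p.1 p.2)
      (volume.prod volume) volume := by
  let e : Fin (n + 1) ⊕ Fin k ≃ Fin (n + k + 1) := finSumFinEquiv.trans (finCongr (by omega))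
  have happ : (fun p : (Fin (n + 1) → ℝ) × (Fin k → ℝ) => app p.1 p.2)
      = MeasurableEquiv.piCongrLeft (fun _ => ℝ) e ∘
        (MeasurableEquiv.sumPiEquivProdPi fun _ => ℝ).symm := by
    ext p i
    obtain ⟨j, rfl⟩ := e.surjective i
    simp only [Function.comp_apply, MeasurableEquiv.piCongrLeft, MeasurableEquiv.coe_mk,
      Equiv.piCongrLeft_apply_apply]
    rcases j with a | b <;> simp [app, e, MeasurableEquiv.sumPiEquivProdPi]
  rw [happ]
  exact (volume_measurePreserving_piCongrLeft _ e).comp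
    (measurePreserving_sumPiEquivProdPi_symm fun _ => volume)

theorem InL2.memLp {f : ∀ n : ℕ, (Fin (n + 1) → ℝ) → ℂ} (hf : InL2 f) (n : ℕ) :
    MemLp (f n) 2 volume := by
  obtain ⟨m, α, F, hF, hfF⟩ := hf
  rw [show f n = fun x => ∑ k, α k * (F k n x : ℂ) from funext (hfF n)]
  exact memLp_finsetSum _ fun k _ => ((hF k).1 n).ofReal.const_mul (α k)

theorem memLp_app_of_memLp {f : ∀ n : ℕ, (Fin (n + 1) → ℝ) → ℂ}
    (hf : ∀ m, MemLp (f m) 2 volume) (n k : ℕ) :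
    MemLp (fun p : (Fin (n + 1) → ℝ) × (Fin k → ℝ) => f (n + k) (app p.1 p.2)) 2
      (volume.prod volume) :=
  (hf (n + k)).comp_measurePreserving (measurePreserving_app n k)

theorem aemeasurable_of_tendsto_integral_sq_norm {f : ∀ n : ℕ, (Fin (n + 1) → ℝ) → ℂ}
    (hf : ∀ m, MemLp (f m) 2 volume) {n : ℕ} {a : (Fin (n + 1) → ℝ) → ℝ}
    (ha : ∀ᵐ x, Tendsto (fun k => ∫ x' : Fin k → ℝ, ‖f (n + k) (app x x')‖ ^ 2) atTop (𝓝 (a x))) :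
    AEMeasurable a volume :=
  aemeasurable_of_tendsto_metrizable_ae atTop
    (fun k => (memLp_app_of_memLp hf n k).aestronglyMeasurable_integral_sq_norm.aemeasurable) ha

theorem ae_norm_le_sqrt_mul_sqrt_of_tendsto {f g : ∀ n : ℕ, (Fin (n + 1) → ℝ) → ℂ}
    (hf : ∀ m, MemLp (f m) 2 volume) (hg : ∀ m, MemLp (g m) 2 volume) {n : ℕ}
    {a b : (Fin (n + 1) → ℝ) → ℝ} {h : (Fin (n + 1) → ℝ) → ℂ}
    (ha : ∀ᵐ x, Tendsto (fun k => ∫ x' : Fin k → ℝ, ‖f (n + k) (app x x')‖ ^ 2) atTop (𝓝 (a x)))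
    (hb : ∀ᵐ x, Tendsto (fun k => ∫ x' : Fin k → ℝ, ‖g (n + k) (app x x')‖ ^ 2) atTop (𝓝 (b x)))
    (hh : ∀ᵐ x, Tendsto (fun k => ∫ x' : Fin k → ℝ,
      f (n + k) (app x x') * starRingEnd ℂ (g (n + k) (app x x'))) atTop (𝓝 (h x))) :
    ∀ᵐ x, ‖h x‖ ≤ √(a x) * √(b x) := by
  have hcs : ∀ᵐ x : Fin (n + 1) → ℝ, ∀ k,
      ‖∫ x' : Fin k → ℝ, f (n + k) (app x x') * starRingEnd ℂ (g (n + k) (app x x'))‖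
        ≤ √(∫ x' : Fin k → ℝ, ‖f (n + k) (app x x')‖ ^ 2)
          * √(∫ x' : Fin k → ℝ, ‖g (n + k) (app x x')‖ ^ 2) := by
    refine ae_all_iff.2 fun k => ?_
    filter_upwards [(memLp_app_of_memLp hf n k).ae_memLp_two_prodMk,
      (memLp_app_of_memLp hg n k).ae_memLp_two_prodMk] with x hu hv
    exact norm_integral_mul_conj_le hu hv
  filter_upwards [ha, hb, hh, hcs] with x hax hbx hhx hcsx
  exact le_of_tendsto_of_tendsto' hhx.norm (hax.sqrt.mul hbx.sqrt) hcsx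

/-- The Cauchy–Schwarz inequality `|f·g|(E) ≤ √(|f|²(E)) √(|g|²(E))` for the product of two
square roots of measures. -/
theorem totalVariation_product_le (f g : ∀ n : ℕ, (Fin (n + 1) → ℝ) → ℂ)
    (hf : InL2 f) (hg : InL2 g)
    (μf μg : Measure (ℕ → ℝ)) [IsFiniteMeasure μf] [IsFiniteMeasure μg]
    (hμf : ∀ n, ∃ h : (Fin (n + 1) → ℝ) → ℝ,
      (∀ᵐ x : Fin (n + 1) → ℝ,
        Tendsto (fun k => ∫ x' : Fin k → ℝ, ‖f (n + k) (app x x')‖ ^ 2) atTop (𝓝 (h x))) ∧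
      μf.map (proj n) = volume.withDensity (fun x => ENNReal.ofReal (h x)))
    (hμg : ∀ n, ∃ h : (Fin (n + 1) → ℝ) → ℝ,
      (∀ᵐ x : Fin (n + 1) → ℝ,
        Tendsto (fun k => ∫ x' : Fin k → ℝ, ‖g (n + k) (app x x')‖ ^ 2) atTop (𝓝 (h x))) ∧
      μg.map (proj n) = volume.withDensity (fun x => ENNReal.ofReal (h x)))
    (ρ : ComplexMeasure (ℕ → ℝ))
    (hρ : ∀ n, ∃ h : (Fin (n + 1) → ℝ) → ℂ,
      (∀ᵐ x : Fin (n + 1) → ℝ,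
        Tendsto (fun k => ∫ x' : Fin k → ℝ,
          f (n + k) (app x x') * (starRingEnd ℂ) (g (n + k) (app x x'))) atTop (𝓝 (h x))) ∧
      ∀ E : Set (Fin (n + 1) → ℝ), MeasurableSet E → (ρ.map (proj n)) E = ∫ x in E, h x) :
    ∀ E : Set (ℕ → ℝ), MeasurableSet E →
      cTV ρ E ≤ (μf E) ^ (1 / 2 : ℝ) * (μg E) ^ (1 / 2 : ℝ) := by
  have hcyl : ∀ s ∈ measurableCylinders fun _ : ℕ => ℝ,
      ‖ρ s‖ₑ ≤ μf s ^ (1 / 2 : ℝ) * μg s ^ (1 / 2 : ℝ) := by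
    intro s hs
    obtain ⟨n, A, hA, rfl⟩ := exists_eq_proj_preimage_of_mem_measurableCylinders hs
    obtain ⟨a, ha, hμfa⟩ := hμf n
    obtain ⟨b, hb, hμgb⟩ := hμg n
    obtain ⟨h, hh, hρh⟩ := hρ n
    exact enorm_apply_preimage_le_of_map_eq (measurable_proj n)
      (aemeasurable_of_tendsto_integral_sq_norm hf.memLp ha)
      (aemeasurable_of_tendsto_integral_sq_norm hg.memLp hb)
      (ae_norm_le_sqrt_mul_sqrt_of_tendsto hf.memLp hg.memLp ha hb hh) hμfa hμgb hρh hA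
  intro E _
  refine iSup_le fun ⟨P, hPm, hPd, hPU⟩ => ?_
  calc ∑' i, (‖ρ (P i)‖₊ : ℝ≥0∞)
      ≤ ∑' i, μf (P i) ^ (1 / 2 : ℝ) * μg (P i) ^ (1 / 2 : ℝ) :=
        ENNReal.tsum_le_tsum fun i => enorm_apply_le_of_forall_mem_isSetAlgebra
          isSetAlgebra_measurableCylinders generateFrom_measurableCylinders.symm hcyl (hPm i)
    _ ≤ (∑' i, μf (P i)) ^ (1 / 2 : ℝ) * (∑' i, μg (P i)) ^ (1 / 2 : ℝ) :=
        ENNReal.tsum_rpow_half_mul_le _ _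
    _ = μf E ^ (1 / 2 : ℝ) * μg E ^ (1 / 2 : ℝ) := by
        rw [← hPU, measure_iUnion hPd hPm, measure_iUnion hPd hPm]
end
end

section
/- Let {g^l}_{l≥1} be a sequence where each g^l = {g^l_n}_{n≥1} is a projective system of L² functions (so each n ↦ ∫_{ℝⁿ} |g^l_n − g^m_n|² dx is nondecreasing and bounded, hence convergent), and suppose the sequence is Cauchy in the sense that lim_{l,m→∞} lim_{n→∞} ∫_{ℝⁿ} |g^l_n(x) − g^m_n(x)|² dx = 0. Then there exists a superprojective system g' = {g'_n} of L² functions such that lim_{l→∞} lim_{n→∞} ∫_{ℝⁿ} |g^l_n(x) − g'_n(x)|² dx = 0. -/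
/-!
For `a ∈ L²(ℝⁿ⁺¹)` let `N a (x) = (∫ a(x, t)² dt)^{1/2}` be its fibre norm over `ℝⁿ`. The reverse
triangle inequality in each fibre makes `N` a `1`-Lipschitz map `L²(ℝⁿ⁺¹) → L²(ℝⁿ)`, and a
nonnegative system is projective exactly when `f_n = N f_{n+1}`. Hence `n ↦ ‖f_n - h_n‖²` is
nondecreasing for projective `f, h`, so the Cauchy hypothesis makes `l ↦ g^l_n` Cauchy in `L²(ℝⁿ)`
uniformly in `n`. The limits `g'_n` satisfy `g'_n = N g'_{n+1}` because `N` commutes with `L²`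
limits, so `g'` is even projective, and `lim_n ‖g^l_n - g'_n‖² = sup_n ‖g^l_n - g'_n‖²` is
bounded by the square of that uniform rate.
-/

open MeasureTheory Filter Topology Real

noncomputable section

section L2

variable {α : Type*} {m : MeasurableSpace α} {μ : Measure α} {f g : α → ℝ}

theorem MeasureTheory.MemLp.norm_toLp_sq (hf : MemLp f 2 μ) :
    ‖hf.toLp f‖ ^ 2 = ∫ x, f x ^ 2 ∂μ := by
  rw [← real_inner_self_eq_norm_sq, L2.inner_def]
  refine integral_congr_ae ?_
  filter_upwards [hf.coeFn_toLp] with x hx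
  simp [hx, sq]

theorem MeasureTheory.MemLp.dist_toLp_sq (hf : MemLp f 2 μ) (hg : MemLp g 2 μ) :
    dist (hf.toLp f) (hg.toLp g) ^ 2 = ∫ x, (f x - g x) ^ 2 ∂μ := by
  rw [dist_eq_norm, ← MemLp.toLp_sub, MemLp.norm_toLp_sq]
  rfl

theorem sq_sqrt_integral_sq_sub_sqrt_integral_sq_le (hf : MemLp f 2 μ) (hg : MemLp g 2 μ) :
    (√(∫ x, f x ^ 2 ∂μ) - √(∫ x, g x ^ 2 ∂μ)) ^ 2 ≤ ∫ x, (f x - g x) ^ 2 ∂μ := by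
  rw [← hf.norm_toLp_sq, ← hg.norm_toLp_sq, sqrt_sq (norm_nonneg _), sqrt_sq (norm_nonneg _),
    ← hf.dist_toLp_sq hg, dist_eq_norm]
  exact sq_le_sq' (abs_le.1 (abs_norm_sub_norm_le _ _)).1 (abs_le.1 (abs_norm_sub_norm_le _ _)).2

end L2

section Fiber

variable {α β : Type*} [MeasurableSpace β] {ν : Measure β}

def fiberNorm (ν : Measure β) (f : α × β → ℝ) (x : α) : ℝ :=
  √(∫ y, f (x, y) ^ 2 ∂ν)

theorem fiberNorm_sq (f : α × β → ℝ) (x : α) : fiberNorm ν f x ^ 2 = ∫ y, f (x, y) ^ 2 ∂ν :=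
  sq_sqrt (integral_nonneg fun _ => sq_nonneg _)

variable [MeasurableSpace α] {μ : Measure α} [SFinite ν] {f g : α × β → ℝ}

theorem MeasureTheory.MemLp.ae_memLp_prodMk [SFinite μ] (hf : MemLp f 2 (μ.prod ν)) :
    ∀ᵐ x ∂μ, MemLp (fun y => f (x, y)) 2 ν := by
  filter_upwards [hf.integrable_sq.prod_right_ae, hf.aestronglyMeasurable.prodMk_left]
    with x hfx hmeas
  exact (memLp_two_iff_integrable_sq hmeas).2 hfx

theorem MeasureTheory.MemLp.fiberNorm (hf : MemLp f 2 (μ.prod ν)) :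
    MemLp (fiberNorm ν f) 2 μ := by
  refine (memLp_two_iff_integrable_sq ?_).2 ?_
  · exact continuous_sqrt.comp_aestronglyMeasurable
      hf.integrable_sq.aestronglyMeasurable.integral_prod_right'
  · simp_rw [fiberNorm_sq]
    exact hf.integrable_sq.integral_prod_left

theorem integral_fiberNorm_sub_sq_le [SFinite μ] (hf : MemLp f 2 (μ.prod ν))
    (hg : MemLp g 2 (μ.prod ν)) :
    ∫ x, (fiberNorm ν f x - fiberNorm ν g x) ^ 2 ∂μ ≤ ∫ p, (f p - g p) ^ 2 ∂(μ.prod ν) := by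
  have hfg : Integrable (fun p => (f p - g p) ^ 2) (μ.prod ν) := (hf.sub hg).integrable_sq
  rw [integral_prod _ hfg]
  refine integral_mono_ae (hf.fiberNorm.sub hg.fiberNorm).integrable_sq hfg.integral_prod_left ?_
  filter_upwards [hf.ae_memLp_prodMk, hg.ae_memLp_prodMk] with x hfx hgx
  exact sq_sqrt_integral_sq_sub_sqrt_integral_sq_le hfx hgx

end Fiber

section Snoc

def MeasurableEquiv.snoc (α : Type*) [MeasurableSpace α] (n : ℕ) :
    ((Fin n → α) × α) ≃ᵐ (Fin (n + 1) → α) :=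
  MeasurableEquiv.prodComm.trans (MeasurableEquiv.piFinSuccAbove (fun _ => α) (Fin.last n)).symm

@[simp]
theorem MeasurableEquiv.snoc_apply {α : Type*} [MeasurableSpace α] {n : ℕ}
    (p : (Fin n → α) × α) : MeasurableEquiv.snoc α n p = Fin.snoc p.1 p.2 := by
  simp [MeasurableEquiv.snoc, MeasurableEquiv.prodComm, MeasurableEquiv.piFinSuccAbove,
    Fin.insertNthEquiv, Fin.insertNth_last']

variable {α : Type*} [MeasureSpace α] [SigmaFinite (volume : Measure α)] {n : ℕ}

theorem volume_preserving_snoc :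
    MeasurePreserving (MeasurableEquiv.snoc α n) (volume.prod volume) volume :=
  (volume_preserving_piFinSuccAbove (fun _ => α) (Fin.last n)).symm.comp
    Measure.measurePreserving_swap

theorem MeasureTheory.MemLp.comp_snoc {E : Type*} [NormedAddCommGroup E] {p : ENNReal}
    {a : (Fin (n + 1) → α) → E} (ha : MemLp a p volume) :
    MemLp (fun q : (Fin n → α) × α => a (Fin.snoc q.1 q.2)) p (volume.prod volume) := by
  simpa [Function.comp_def] using ha.comp_measurePreserving volume_preserving_snoc

theorem integral_comp_snoc {E : Type*} [NormedAddCommGroup E] [NormedSpace ℝ E]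
    (F : (Fin (n + 1) → α) → E) :
    ∫ q : (Fin n → α) × α, F (Fin.snoc q.1 q.2) ∂(volume.prod volume) = ∫ y, F y := by
  simpa using volume_preserving_snoc.integral_comp' F

def snocFiberNorm (a : (Fin (n + 1) → α) → ℝ) : (Fin n → α) → ℝ :=
  fiberNorm volume fun q => a (Fin.snoc q.1 q.2)

variable {a b : (Fin (n + 1) → α) → ℝ}

theorem MeasureTheory.MemLp.snocFiberNorm (ha : MemLp a 2 volume) :
    MemLp (snocFiberNorm a) 2 volume :=
  ha.comp_snoc.fiberNorm

theorem integral_snocFiberNorm_sub_sq_le (ha : MemLp a 2 volume) (hb : MemLp b 2 volume) :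
    ∫ x, (snocFiberNorm a x - snocFiberNorm b x) ^ 2 ≤ ∫ y, (a y - b y) ^ 2 :=
  (integral_fiberNorm_sub_sq_le ha.comp_snoc hb.comp_snoc).trans_eq
    (integral_comp_snoc fun y => (a y - b y) ^ 2)

theorem MeasureTheory.MemLp.dist_toLp_snocFiberNorm_le (ha : MemLp a 2 volume)
    (hb : MemLp b 2 volume) :
    dist (ha.snocFiberNorm.toLp _) (hb.snocFiberNorm.toLp _) ≤ dist (ha.toLp a) (hb.toLp b) := by
  rw [← pow_le_pow_iff_left₀ dist_nonneg dist_nonneg two_ne_zero, MemLp.dist_toLp_sq,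
    MemLp.dist_toLp_sq]
  exact integral_snocFiberNorm_sub_sq_le ha hb

end Snoc

structure IsProjectiveSystem (F : ∀ n : ℕ, (Fin (n + 1) → ℝ) → ℝ) : Prop where
  memLp : ∀ n, MemLp (F n) 2 volume
  ae_nonneg : ∀ n, ∀ᵐ x, 0 ≤ F n x
  integral_sq_snoc : ∀ n, ∀ᵐ x, ∫ t, F (n + 1) (Fin.snoc x t) ^ 2 = F n x ^ 2

namespace IsProjectiveSystem

variable {F G : ∀ n : ℕ, (Fin (n + 1) → ℝ) → ℝ}

theorem isSPS (hF : IsProjectiveSystem F) : IsSPS F :=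
  ⟨hF.memLp, hF.ae_nonneg, fun n => (hF.integral_sq_snoc n).mono fun _ h => h.le⟩

theorem ae_eq_snocFiberNorm (hF : IsProjectiveSystem F) (n : ℕ) :
    F n =ᵐ[volume] snocFiberNorm (F (n + 1)) := by
  filter_upwards [hF.ae_nonneg n, hF.integral_sq_snoc n] with x hx hsq
  simp only [snocFiberNorm, fiberNorm, hsq, sqrt_sq hx]

theorem of_ae_eq_snocFiberNorm (hmem : ∀ n, MemLp (F n) 2 volume)
    (h : ∀ n, F n =ᵐ[volume] snocFiberNorm (F (n + 1))) : IsProjectiveSystem F where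
  memLp := hmem
  ae_nonneg n := (h n).mono fun _ hx => hx ▸ sqrt_nonneg _
  integral_sq_snoc n := (h n).mono fun x hx => by rw [hx, snocFiberNorm, fiberNorm_sq]

theorem monotone_integral_sq_sub (hF : IsProjectiveSystem F) (hG : IsProjectiveSystem G) :
    Monotone fun n => ∫ x, (F n x - G n x) ^ 2 := by
  refine monotone_nat_of_le_succ fun n => ?_
  calc ∫ x, (F n x - G n x) ^ 2
      = ∫ x, (snocFiberNorm (F (n + 1)) x - snocFiberNorm (G (n + 1)) x) ^ 2 := by
        refine integral_congr_ae ?_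
        filter_upwards [hF.ae_eq_snocFiberNorm n, hG.ae_eq_snocFiberNorm n] with x hFx hGx
        rw [hFx, hGx]
    _ ≤ ∫ y, (F (n + 1) y - G (n + 1) y) ^ 2 :=
        integral_snocFiberNorm_sub_sq_le (hF.memLp (n + 1)) (hG.memLp (n + 1))

theorem of_tendsto {F : ℕ → ∀ n : ℕ, (Fin (n + 1) → ℝ) → ℝ}
    (hF : ∀ l, IsProjectiveSystem (F l)) {H : ∀ n, Lp ℝ 2 (volume : Measure (Fin (n + 1) → ℝ))}
    (hFH : ∀ n, Tendsto (fun l => ((hF l).memLp n).toLp (F l n)) atTop (𝓝 (H n))) :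
    IsProjectiveSystem fun n => H n := by
  refine of_ae_eq_snocFiberNorm (fun n => Lp.memLp _) fun n => ?_
  have hH := (Lp.memLp (H (n + 1))).snocFiberNorm
  suffices H n = hH.toLp _ from this ▸ hH.coeFn_toLp
  refine tendsto_nhds_unique (hFH n) ?_
  have hFN : ∀ l, ((hF l).memLp n).toLp (F l n) = ((hF l).memLp (n + 1)).snocFiberNorm.toLp _ :=
    fun l => (MemLp.toLp_eq_toLp_iff _ _).2 ((hF l).ae_eq_snocFiberNorm n)
  simp_rw [hFN]
  refine tendsto_iff_dist_tendsto_zero.2 (squeeze_zero (fun _ => dist_nonneg)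
    (fun l => ((hF l).memLp (n + 1)).dist_toLp_snocFiberNorm_le (Lp.memLp (H (n + 1)))) ?_)
  simpa [Lp.toLp_coeFn] using tendsto_iff_dist_tendsto_zero.1 (hFH (n + 1))

end IsProjectiveSystem

theorem exists_tendsto_of_forall_dist_le {X : ℕ → Type*} [∀ n, PseudoMetricSpace (X n)]
    [∀ n, CompleteSpace (X n)] {x : ∀ n, ℕ → X n} {δ : ℕ → ℕ → ℝ}
    (hδ : Tendsto (fun p : ℕ × ℕ => δ p.1 p.2) atTop (𝓝 0))
    (hx : ∀ n l m, dist (x n l) (x n m) ≤ δ l m) :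
    ∃ y : ∀ n, X n, (∀ n, Tendsto (x n) atTop (𝓝 (y n))) ∧
      ∃ ε : ℕ → ℝ, Tendsto ε atTop (𝓝 0) ∧ ∀ l n, dist (x n l) (y n) ≤ ε l := by
  have hδε : ∀ ε > 0, ∃ N, ∀ l ≥ N, ∀ m ≥ N, δ l m ≤ ε := fun ε hε =>
    eventually_atTop_prod_self'.1 (hδ.eventually (ge_mem_nhds hε))
  have hcauchy : ∀ n, CauchySeq (x n) := fun n => Metric.cauchySeq_iff'.2 fun ε hε => by
    obtain ⟨N, hN⟩ := hδε (ε / 2) (half_pos hε)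
    exact ⟨N, fun l hl => (hx n l N).trans_lt ((hN l hl N le_rfl).trans_lt (half_lt_self hε))⟩
  choose y hy using fun n => cauchySeq_tendsto_of_complete (hcauchy n)
  have hclose : ∀ ε > 0, ∃ N, ∀ l ≥ N, ∀ n, dist (x n l) (y n) ≤ ε := fun ε hε => by
    obtain ⟨N, hN⟩ := hδε ε hε
    refine ⟨N, fun l hl n => le_of_tendsto (tendsto_const_nhds.dist (hy n)) ?_⟩
    filter_upwards [eventually_ge_atTop N] with m hm
    exact (hx n l m).trans (hN l hl m hm)
  obtain ⟨N, hN⟩ := hclose 1 one_pos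
  have hbdd : ∀ l, BddAbove (Set.range fun n => dist (x n l) (y n)) := fun l =>
    ⟨δ l N + 1, Set.forall_mem_range.2 fun n =>
      (dist_triangle _ (x n N) _).trans (add_le_add (hx n l N) (hN N le_rfl n))⟩
  refine ⟨y, hy, fun l => ⨆ n, dist (x n l) (y n), ?_, fun l n => le_ciSup (hbdd l) n⟩
  refine Metric.tendsto_atTop.2 fun ε hε => ?_
  obtain ⟨N, hN⟩ := hclose (ε / 2) (half_pos hε)
  refine ⟨N, fun l hl => ?_⟩
  have hsup : ⨆ n, dist (x n l) (y n) ≤ ε / 2 := ciSup_le (hN l hl)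
  rw [Real.dist_eq, sub_zero, abs_of_nonneg (Real.iSup_nonneg fun _ => dist_nonneg)]
  linarith

/-- A Cauchy sequence of projective systems of L² functions, in the distance
`‖g^l - g^m‖² = lim_n ∫_{ℝⁿ} |g^l_n - g^m_n|² dx`, converges to some superprojective
system: the key step in the completeness of `L²(ℝ^∞)`. -/
theorem cauchy_projective_systems_converge
    (g : ℕ → ∀ n : ℕ, (Fin (n + 1) → ℝ) → ℝ)
    (hSPS : ∀ l, IsSPS (g l))
    (hproj : ∀ l n, ∀ᵐ x : Fin (n + 1) → ℝ,
      (∫ t : ℝ, g l (n + 1) (Fin.snoc x t) ^ 2) = g l n x ^ 2)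
    (D : ℕ → ℕ → ℝ)
    (hD : ∀ l m, Tendsto (fun n => ∫ x : Fin (n + 1) → ℝ, (g l n x - g m n x) ^ 2)
      atTop (𝓝 (D l m)))
    (hCauchy : Tendsto (fun p : ℕ × ℕ => D p.1 p.2) atTop (𝓝 0)) :
    ∃ g' : ∀ n : ℕ, (Fin (n + 1) → ℝ) → ℝ, IsSPS g' ∧
      ∃ D' : ℕ → ℝ,
        (∀ l, Tendsto (fun n => ∫ x : Fin (n + 1) → ℝ, (g l n x - g' n x) ^ 2)
          atTop (𝓝 (D' l))) ∧
        Tendsto D' atTop (𝓝 0) := by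
  have hg : ∀ l, IsProjectiveSystem (g l) := fun l => ⟨(hSPS l).1, (hSPS l).2.1, hproj l⟩
  set G : ∀ n, ℕ → Lp ℝ 2 (volume : Measure (Fin (n + 1) → ℝ)) :=
    fun n l => ((hg l).memLp n).toLp (g l n)
  have hG_dist : ∀ n l m, dist (G n l) (G n m) ≤ √(D l m) := fun n l m =>
    le_sqrt_of_sq_le <| (MemLp.dist_toLp_sq _ _).trans_le <|
      ((hg l).monotone_integral_sq_sub (hg m)).ge_of_tendsto (hD l m) n
  obtain ⟨H, hGH, ε, hε, hGH_le⟩ :=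
    exists_tendsto_of_forall_dist_le (by simpa using hCauchy.sqrt) hG_dist
  have hH : IsProjectiveSystem fun n => H n := IsProjectiveSystem.of_tendsto hg hGH
  have hgH : ∀ l n, ∫ x, (g l n x - H n x) ^ 2 = dist (G n l) (H n) ^ 2 := fun l n => by
    simpa only [Lp.toLp_coeFn] using (((hg l).memLp n).dist_toLp_sq (Lp.memLp (H n))).symm
  have hgH_le : ∀ l n, ∫ x, (g l n x - H n x) ^ 2 ≤ ε l ^ 2 := fun l n =>
    (hgH l n).trans_le (pow_le_pow_left₀ dist_nonneg (hGH_le l n) 2)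
  refine ⟨fun n => H n, hH.isSPS, fun l => ⨆ n, ∫ x, (g l n x - H n x) ^ 2, fun l => ?_, ?_⟩
  · exact tendsto_atTop_ciSup ((hg l).monotone_integral_sq_sub hH)
      ⟨_, Set.forall_mem_range.2 (hgH_le l)⟩
  · exact squeeze_zero (fun l => Real.iSup_nonneg fun _ => integral_nonneg fun _ => sq_nonneg _)
      (fun l => ciSup_le (hgH_le l)) (by simpa using hε.pow 2)
end
end

section
/- Let T > 0 and let φ : [0,T] → ℝ be continuous with φ(0) = 0. If φ has quadratic variation ⟨φ⟩_T, then lim_{N→∞} (2^N/T) ∫₀^{T − T/2^N} |φ(t + T/2^N) − φ(t)|² dt = ⟨φ⟩_T. More precisely, for every positive integer N, inf_{|Δ| ≤ T/2^N} Q_T(φ,Δ) − sup_{0 ≤ v ≤ T/2^N} ( |φ(v) − φ(0)|² + |φ(T) − φ(T−v)|² ) ≤ (2^N/T) ∫₀^{T − T/2^N} |φ(t + T/2^N) − φ(t)|² dt ≤ sup_{|Δ| ≤ T/2^N} Q_T(φ,Δ), where the infimum and supremum are over partitions Δ of [0,T] with mesh at most T/2^N. -/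
/-! With `h = T / 2 ^ N = T / (m + 1)`, the partitions `0 < s < s + h < ⋯ < s + m h < T`,
`0 < s < h`, have mesh `≤ h`, and integrating their quadratic sums over the offset `s` turns the
interior increments into `∫₀^{T-h} |φ(t + h) - φ(t)|² dt`. This squeezes
`h⁻¹ ∫₀^{T-h} |φ(t + h) - φ(t)|² dt` between the quadratic sums of mesh `≤ h`, up to the two end
increments, which vanish as `h → 0` by continuity of `φ` at `0` and `T`; the quadratic variation
then forces the limit. -/

open MeasureTheory Filter Topology Real intervalIntegral

noncomputable section

/-- `v 0 = 0 < v 1 < ⋯ < v n = T` is a partition of `[0, T]` into `n` subintervals. -/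
def IsPartition (T : ℝ) (n : ℕ) (v : ℕ → ℝ) : Prop :=
  0 < n ∧ v 0 = 0 ∧ v n = T ∧ ∀ i < n, v i < v (i + 1)

/-- The quadratic variation sum `Q_T(φ, Δ) = ∑ |φ(v_i) - φ(v_{i-1})|²` of `φ` over the
partition `v`. -/
def quadSum (φ : ℝ → ℝ) (n : ℕ) (v : ℕ → ℝ) : ℝ :=
  ∑ i ∈ Finset.range n, (φ (v (i + 1)) - φ (v i)) ^ 2

/-- `φ` has quadratic variation `q` over `[0, T]`: `Q_T(φ, Δ) → q` as the mesh `|Δ| → 0`. -/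
def HasQuadVar (T : ℝ) (φ : ℝ → ℝ) (q : ℝ) : Prop :=
  ∀ ε > 0, ∃ δ > 0, ∀ (n : ℕ) (v : ℕ → ℝ), IsPartition T n v →
    (∀ i < n, v (i + 1) - v i < δ) → |quadSum φ n v - q| < ε

/-- The set of quadratic variation sums of `φ` over partitions of `[0,T]` of mesh `≤ δ`. -/
def quadSums (T : ℝ) (φ : ℝ → ℝ) (δ : ℝ) : Set ℝ :=
  {Q | ∃ (n : ℕ) (v : ℕ → ℝ), IsPartition T n v ∧ (∀ i < n, v (i + 1) - v i ≤ δ) ∧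
    Q = quadSum φ n v}

lemma ContinuousOn.sq_sub_comp {φ f g : ℝ → ℝ} {s t : Set ℝ} (hφ : ContinuousOn φ t)
    (hf : Continuous f) (hg : Continuous g) (hfs : Set.MapsTo f s t) (hgs : Set.MapsTo g s t) :
    ContinuousOn (fun x => (φ (f x) - φ (g x)) ^ 2) s :=
  ((hφ.comp hf.continuousOn hfs).sub (hφ.comp hg.continuousOn hgs)).pow 2

section Translates

variable {F : ℝ → ℝ} {h : ℝ} {m : ℕ}

lemma IntervalIntegrable.mono_nat_mul (hF : IntervalIntegrable F volume 0 (m * h)) (hh : 0 ≤ h)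
    {k : ℕ} (hk : k < m) : IntervalIntegrable F volume (k * h) ((k + 1 : ℕ) * h) := by
  have hkm : ((k + 1 : ℕ) : ℝ) ≤ m := by exact_mod_cast hk
  refine hF.mono_set ?_
  rw [Set.uIcc_of_le (by gcongr; simp), Set.uIcc_of_le (by positivity)]
  exact Set.Icc_subset_Icc (by positivity) (by gcongr)

lemma IntervalIntegrable.comp_add_nat_mul (hF : IntervalIntegrable F volume 0 (m * h))
    (hh : 0 ≤ h) {k : ℕ} (hk : k < m) :
    IntervalIntegrable (fun s => F (s + k * h)) volume 0 h := by
  simpa [add_mul] using (hF.mono_nat_mul hh hk).comp_add_right (k * h)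

lemma IntervalIntegrable.sum_comp_add_nat_mul (hF : IntervalIntegrable F volume 0 (m * h))
    (hh : 0 ≤ h) : IntervalIntegrable (fun s => ∑ k ∈ Finset.range m, F (s + k * h)) volume 0 h := by
  simpa only [Finset.sum_fn] using
    IntervalIntegrable.sum _ fun k hk => hF.comp_add_nat_mul hh (Finset.mem_range.1 hk)

theorem integral_sum_comp_add_nat_mul (hF : IntervalIntegrable F volume 0 (m * h))
    (hh : 0 ≤ h) :
    ∫ s in (0 : ℝ)..h, ∑ k ∈ Finset.range m, F (s + k * h) = ∫ t in (0 : ℝ)..(m * h), F t := by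
  rw [integral_finsetSum fun k hk => hF.comp_add_nat_mul hh (Finset.mem_range.1 hk)]
  have hpiece : ∀ k ∈ Finset.range m,
      ∫ s in (0 : ℝ)..h, F (s + k * h) = ∫ t in (k : ℝ) * h..((k + 1 : ℕ) : ℝ) * h, F t := by
    intro k _
    rw [integral_comp_add_right]
    push_cast
    ring_nf
  rw [Finset.sum_congr rfl hpiece,
    sum_integral_adjacent_intervals (a := fun k : ℕ => (k : ℝ) * h)
      fun k hk => hF.mono_nat_mul hh hk]
  simp

end Translates

section ShiftedPartition

variable {s h T : ℝ} {m : ℕ}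

def shiftedPartition (s h T : ℝ) (m : ℕ) : ℕ → ℝ
  | 0 => 0
  | i + 1 => if i ≤ m then s + i * h else T

lemma isPartition_shiftedPartition (hs : 0 < s) (hh : 0 < h) (hT : s + m * h < T) :
    IsPartition T (m + 2) (shiftedPartition s h T m) := by
  refine ⟨by omega, rfl, by simp [shiftedPartition], fun i hi => ?_⟩
  rcases i with _ | i
  · simpa [shiftedPartition] using hs
  · simp only [shiftedPartition, if_pos (by omega : i ≤ m)]
    split_ifs
    · push_cast; linarith
    · obtain rfl : i = m := by omega
      exact hT

lemma shiftedPartition_sub_le (hsh : s ≤ h) (hT : T - (s + m * h) ≤ h) :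
    ∀ i < m + 2, shiftedPartition s h T m (i + 1) - shiftedPartition s h T m i ≤ h := by
  intro i hi
  rcases i with _ | i
  · simpa [shiftedPartition] using hsh
  · simp only [shiftedPartition, if_pos (by omega : i ≤ m)]
    split_ifs
    · push_cast; linarith
    · obtain rfl : i = m := by omega
      exact hT

lemma quadSum_shiftedPartition (φ : ℝ → ℝ) :
    quadSum φ (m + 2) (shiftedPartition s h T m) =
      (φ s - φ 0) ^ 2 + ∑ k ∈ Finset.range m, (φ (s + k * h + h) - φ (s + k * h)) ^ 2 +
        (φ T - φ (s + m * h)) ^ 2 := by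
  rw [quadSum, Finset.sum_range_succ, Finset.sum_range_succ']
  simp only [shiftedPartition, le_refl, if_true, if_neg (by omega : ¬ m + 1 ≤ m)]
  have hmid : ∀ k ∈ Finset.range m,
      (φ (if k + 1 ≤ m then s + ↑(k + 1) * h else T) - φ (if k ≤ m then s + k * h else T)) ^ 2 =
        (φ (s + k * h + h) - φ (s + k * h)) ^ 2 := fun k hk => by
    rw [Finset.mem_range] at hk
    rw [if_pos (by omega), if_pos (by omega)]
    push_cast
    ring_nf
  rw [Finset.sum_congr rfl hmid]
  simp only [zero_le, if_true, Nat.cast_zero, zero_mul, add_zero]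
  ring

end ShiftedPartition

lemma bddBelow_quadSums (T : ℝ) (φ : ℝ → ℝ) (δ : ℝ) : BddBelow (quadSums T φ δ) :=
  ⟨0, by rintro _ ⟨n, v, -, -, rfl⟩; exact Finset.sum_nonneg fun _ _ => sq_nonneg _⟩

def endpointIncrementSq (φ : ℝ → ℝ) (T v : ℝ) : ℝ :=
  (φ v - φ 0) ^ 2 + (φ T - φ (T - v)) ^ 2

lemma continuousOn_endpointIncrementSq {φ : ℝ → ℝ} {T : ℝ} (hT : 0 ≤ T)
    (hφ : ContinuousOn φ (Set.Icc 0 T)) : ContinuousOn (endpointIncrementSq φ T) (Set.Icc 0 T) :=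
  (hφ.sq_sub_comp continuous_id' continuous_const (fun _ hv => hv) fun _ _ => ⟨le_rfl, hT⟩).add
    (hφ.sq_sub_comp continuous_const (continuous_sub_left T) (fun _ _ => ⟨hT, le_rfl⟩)
      fun v hv => ⟨by linarith [hv.2], by linarith [hv.1]⟩)

section OneStep

variable {T h : ℝ} {φ : ℝ → ℝ} {m : ℕ}

lemma sum_add_endpoints_mem_quadSums (hmh : ((m : ℝ) + 1) * h = T) {s : ℝ}
    (hs : s ∈ Set.Ioo 0 h) :
    (φ s - φ 0) ^ 2 + ∑ k ∈ Finset.range m, (φ (s + k * h + h) - φ (s + k * h)) ^ 2 +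
      (φ T - φ (T - (h - s))) ^ 2 ∈ quadSums T φ h := by
  obtain ⟨hs₀, hsh⟩ := hs
  have hend : T - (h - s) = s + m * h := by linarith
  refine ⟨m + 2, shiftedPartition s h T m, isPartition_shiftedPartition hs₀ (hs₀.trans hsh)
    (by linarith), shiftedPartition_sub_le hsh.le (by linarith), ?_⟩
  rw [quadSum_shiftedPartition, hend]

lemma quadSums_nonempty (hh : 0 < h) (hmh : ((m : ℝ) + 1) * h = T) :
    (quadSums T φ h).Nonempty :=
  ⟨_, sum_add_endpoints_mem_quadSums hmh ⟨half_pos hh, half_lt_self hh⟩⟩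

variable (hh : 0 < h) (hmh : ((m : ℝ) + 1) * h = T) (hφ : ContinuousOn φ (Set.Icc 0 T))
include hh hmh hφ

lemma intervalIntegrable_sq_increments :
    IntervalIntegrable (fun t => (φ (t + h) - φ t) ^ 2) volume 0 (m * h) := by
  refine (hφ.sq_sub_comp (continuous_add_const h) continuous_id' ?_ ?_).intervalIntegrable_of_Icc
    (by positivity)
  · exact fun t ht => ⟨by linarith [ht.1], by linarith [ht.2]⟩
  · exact fun t ht => ⟨ht.1, by linarith [ht.2]⟩

lemma integral_sq_increments_eq :
    ∫ t in (0 : ℝ)..(T - h), (φ (t + h) - φ t) ^ 2 =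
      ∫ s in (0 : ℝ)..h, ∑ k ∈ Finset.range m, (φ (s + k * h + h) - φ (s + k * h)) ^ 2 := by
  rw [show T - h = m * h by linarith]
  exact (integral_sum_comp_add_nat_mul (intervalIntegrable_sq_increments hh hmh hφ) hh.le).symm

lemma inv_mul_integral_mem_lowerBounds_upperBounds :
    h⁻¹ * ∫ t in (0 : ℝ)..(T - h), (φ (t + h) - φ t) ^ 2 ∈
      lowerBounds (upperBounds (quadSums T φ h)) := by
  intro r hr
  have hpt : ∀ s ∈ Set.Ioo 0 h,
      ∑ k ∈ Finset.range m, (φ (s + k * h + h) - φ (s + k * h)) ^ 2 ≤ r := fun s hs => by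
    have := hr (sum_add_endpoints_mem_quadSums hmh hs)
    nlinarith [sq_nonneg (φ s - φ 0), sq_nonneg (φ T - φ (T - (h - s)))]
  rw [integral_sq_increments_eq hh hmh hφ, inv_mul_le_iff₀ hh]
  calc _ ≤ ∫ _ in (0 : ℝ)..h, r := integral_mono_on_of_le_Ioo hh.le
        ((intervalIntegrable_sq_increments hh hmh hφ).sum_comp_add_nat_mul hh.le)
        intervalIntegrable_const hpt
    _ = h * r := by simp

lemma sInf_sub_sSup_le_inv_mul_integral :
    sInf (quadSums T φ h) - sSup (endpointIncrementSq φ T '' Set.Icc 0 h) ≤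
      h⁻¹ * ∫ t in (0 : ℝ)..(T - h), (φ (t + h) - φ t) ^ 2 := by
  set S := sInf (quadSums T φ h)
  set B := sSup (endpointIncrementSq φ T '' Set.Icc 0 h)
  have hhT : h ≤ T := by nlinarith [m.cast_nonneg (α := ℝ)]
  have hsub : Set.Icc 0 h ⊆ Set.Icc 0 T := Set.Icc_subset_Icc le_rfl hhT
  have hend := (continuousOn_endpointIncrementSq (hh.le.trans hhT) hφ).mono hsub
  have hleft : IntervalIntegrable (fun s => (φ s - φ 0) ^ 2) volume 0 h :=
    (hφ.sq_sub_comp continuous_id' continuous_const hsub fun _ _ => ⟨le_rfl, hh.le.trans hhT⟩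
      ).intervalIntegrable_of_Icc hh.le
  have hright : IntervalIntegrable (fun v => (φ T - φ (T - v)) ^ 2) volume 0 h :=
    (hφ.sq_sub_comp continuous_const (continuous_sub_left T) (fun _ _ => ⟨hh.le.trans hhT, le_rfl⟩)
      fun v hv => ⟨by linarith [hv.2], by linarith [hv.1]⟩).intervalIntegrable_of_Icc hh.le
  have hright' : IntervalIntegrable (fun s => (φ T - φ (T - (h - s))) ^ 2) volume 0 h :=
    (hφ.sq_sub_comp continuous_const (by fun_prop) (fun _ _ => ⟨hh.le.trans hhT, le_rfl⟩)
      fun v hv => ⟨by linarith [hv.1], by linarith [hv.2]⟩).intervalIntegrable_of_Icc hh.le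
  -- substituting `v = h - s` puts both end increments at the same offset `v`
  have hreflect : ∫ s in (0 : ℝ)..h, ((φ s - φ 0) ^ 2 + (φ T - φ (T - (h - s))) ^ 2) =
      ∫ v in (0 : ℝ)..h, endpointIncrementSq φ T v := by
    have := integral_comp_sub_left (fun v => (φ T - φ (T - v)) ^ 2) h (a := 0) (b := h)
    unfold endpointIncrementSq
    rw [integral_add hleft hright', integral_add hleft hright, this, sub_self, sub_zero]
  have hB : ∫ v in (0 : ℝ)..h, endpointIncrementSq φ T v ≤ h * B := by
    have hbdd := (isCompact_Icc.image_of_continuousOn hend).bddAbove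
    calc _ ≤ ∫ _ in (0 : ℝ)..h, B := integral_mono_on hh.le (hleft.add hright)
          intervalIntegrable_const fun v hv => le_csSup hbdd (Set.mem_image_of_mem _ hv)
      _ = h * B := by simp
  have hpt : ∀ s ∈ Set.Ioo 0 h, S - ((φ s - φ 0) ^ 2 + (φ T - φ (T - (h - s))) ^ 2) ≤
      ∑ k ∈ Finset.range m, (φ (s + k * h + h) - φ (s + k * h)) ^ 2 := fun s hs => by
    linarith [csInf_le (bddBelow_quadSums T φ h) (sum_add_endpoints_mem_quadSums hmh hs)]
  rw [integral_sq_increments_eq hh hmh hφ, le_inv_mul_iff₀ hh]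
  calc h * (S - B) ≤ h * S - ∫ v in (0 : ℝ)..h, endpointIncrementSq φ T v := by linarith
    _ = ∫ s in (0 : ℝ)..h, S - ((φ s - φ 0) ^ 2 + (φ T - φ (T - (h - s))) ^ 2) := by
      rw [integral_sub intervalIntegrable_const (hleft.add hright'), hreflect]
      simp
    _ ≤ _ := integral_mono_on_of_le_Ioo hh.le (intervalIntegrable_const.sub (hleft.add hright'))
        ((intervalIntegrable_sq_increments hh hmh hφ).sum_comp_add_nat_mul hh.le) hpt

end OneStep

lemma eventually_sSup_image_Icc_le {g : ℝ → ℝ} {b ε : ℝ} (hb : 0 < b)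
    (hg : ContinuousWithinAt g (Set.Icc 0 b) 0) (hε : g 0 < ε) (hε₀ : 0 ≤ ε) :
    ∀ᶠ δ in 𝓝 0, sSup (g '' Set.Icc 0 δ) ≤ ε := by
  rw [ContinuousWithinAt, nhdsWithin_Icc_eq_nhdsGE hb] at hg
  obtain ⟨u, hu, hsub⟩ := mem_nhdsGE_iff_exists_Ico_subset.1 (hg (Iio_mem_nhds hε))
  filter_upwards [Iio_mem_nhds hu] with δ hδ
  refine Real.sSup_le ?_ hε₀
  rintro _ ⟨v, hv, rfl⟩
  exact (hsub ⟨hv.1, hv.2.trans_lt hδ⟩).le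

lemma HasQuadVar.eventually_quadSums_subset {T : ℝ} {φ : ℝ → ℝ} {q : ℝ} (hq : HasQuadVar T φ q)
    {ε : ℝ} (hε : 0 < ε) : ∀ᶠ δ in 𝓝 0, quadSums T φ δ ⊆ Set.Ioo (q - ε) (q + ε) := by
  obtain ⟨δ₀, hδ₀, hclose⟩ := hq ε hε
  filter_upwards [Iio_mem_nhds hδ₀] with δ hδ
  rintro _ ⟨n, v, hv, hmesh, rfl⟩
  have := abs_sub_lt_iff.1 (hclose n v hv fun i hi => (hmesh i hi).trans_lt hδ)
  exact ⟨by linarith, by linarith⟩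

lemma HasQuadVar.tendsto_of_quadSums_bounds {ι : Type*} {l : Filter ι} {T : ℝ} {φ : ℝ → ℝ}
    {q : ℝ} (hq : HasQuadVar T φ q) (hT : 0 < T) (hφ : ContinuousOn φ (Set.Icc 0 T))
    {δ A : ι → ℝ} (hδ : Tendsto δ l (𝓝 0)) (hne : ∀ i, (quadSums T φ (δ i)).Nonempty)
    (hlow : ∀ i, sInf (quadSums T φ (δ i)) - sSup (endpointIncrementSq φ T '' Set.Icc 0 (δ i)) ≤
      A i)
    (hup : ∀ i, A i ∈ lowerBounds (upperBounds (quadSums T φ (δ i)))) :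
    Tendsto A l (𝓝 q) := by
  refine tendsto_order.2 ⟨fun a ha => ?_, fun b hb => ?_⟩
  · have hε : 0 < (q - a) / 3 := by linarith
    have hend : ContinuousWithinAt (endpointIncrementSq φ T) (Set.Icc 0 T) 0 :=
      continuousOn_endpointIncrementSq hT.le hφ _ (Set.left_mem_Icc.2 hT.le)
    filter_upwards [hδ.eventually (hq.eventually_quadSums_subset hε),
      hδ.eventually (eventually_sSup_image_Icc_le hT hend (by simpa [endpointIncrementSq]) hε.le)]
      with i hsub hsup
    have := le_csInf (hne i) fun Q hQ => (hsub hQ).1.le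
    linarith [hlow i]
  · have hε : 0 < (b - q) / 2 := by linarith
    filter_upwards [hδ.eventually (hq.eventually_quadSums_subset hε)] with i hsub
    linarith [hup i fun Q hQ => (hsub hQ).2.le]

theorem dyadic_time_average_tendsto_quadVar_general (T : ℝ) (hT : 0 < T) (φ : ℝ → ℝ)
    (hφc : ContinuousOn φ (Set.Icc 0 T))
    (q : ℝ) (hq : HasQuadVar T φ q) :
    Tendsto (fun N : ℕ => (2 ^ N / T) *
        ∫ t in (0 : ℝ)..(T - T / 2 ^ N), (φ (t + T / 2 ^ N) - φ t) ^ 2)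
      atTop (𝓝 q) ∧
    ∀ N : ℕ, 1 ≤ N →
      (sInf (quadSums T φ (T / 2 ^ N)) -
          sSup ((fun v => (φ v - φ 0) ^ 2 + (φ T - φ (T - v)) ^ 2) ''
            Set.Icc 0 (T / 2 ^ N)) ≤
        (2 ^ N / T) * ∫ t in (0 : ℝ)..(T - T / 2 ^ N), (φ (t + T / 2 ^ N) - φ t) ^ 2) ∧
      ∀ r ∈ upperBounds (quadSums T φ (T / 2 ^ N)),
        (2 ^ N / T) * ∫ t in (0 : ℝ)..(T - T / 2 ^ N), (φ (t + T / 2 ^ N) - φ t) ^ 2 ≤ r := by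
  have hpos (N : ℕ) : 0 < T / 2 ^ N := by positivity
  have hdyadic (N : ℕ) : (((2 ^ N - 1 : ℕ) : ℝ) + 1) * (T / 2 ^ N) = T := by
    rw [Nat.cast_sub Nat.one_le_two_pow]
    push_cast
    field_simp
    ring
  have hlow (N : ℕ) := sInf_sub_sSup_le_inv_mul_integral (hpos N) (hdyadic N) hφc
  have hup (N : ℕ) := inv_mul_integral_mem_lowerBounds_upperBounds (hpos N) (hdyadic N) hφc
  simp only [inv_div] at hlow hup
  refine ⟨hq.tendsto_of_quadSums_bounds hT hφc
    (tendsto_const_nhds.div_atTop (tendsto_pow_atTop_atTop_of_one_lt one_lt_two))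
    (fun N => quadSums_nonempty (hpos N) (hdyadic N)) hlow hup, fun N _ => ⟨hlow N, hup N⟩⟩

/-- If `φ ∈ C₀[0,T]` has quadratic variation `⟨φ⟩_T`, then
`(2^N/T) ∫₀^{T-T/2^N} |φ(t+T/2^N) - φ(t)|² dt → ⟨φ⟩_T`; more precisely this quantity is
squeezed between `inf_{|Δ|≤T/2^N} Q_T(φ,Δ) - sup_{0≤v≤T/2^N}(|φ(v)-φ(0)|² + |φ(T)-φ(T-v)|²)`
and `sup_{|Δ|≤T/2^N} Q_T(φ,Δ)`. -/
theorem dyadic_time_average_tendsto_quadVar (T : ℝ) (hT : 0 < T) (φ : ℝ → ℝ)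
    (hφc : ContinuousOn φ (Set.Icc 0 T)) (hφ0 : φ 0 = 0)
    (q : ℝ) (hq : HasQuadVar T φ q) :
    Tendsto (fun N : ℕ => (2 ^ N / T) *
        ∫ t in (0 : ℝ)..(T - T / 2 ^ N), (φ (t + T / 2 ^ N) - φ t) ^ 2)
      atTop (𝓝 q) ∧
    ∀ N : ℕ, 1 ≤ N →
      (sInf (quadSums T φ (T / 2 ^ N)) -
          sSup ((fun v => (φ v - φ 0) ^ 2 + (φ T - φ (T - v)) ^ 2) ''
            Set.Icc 0 (T / 2 ^ N)) ≤
        (2 ^ N / T) * ∫ t in (0 : ℝ)..(T - T / 2 ^ N), (φ (t + T / 2 ^ N) - φ t) ^ 2) ∧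
      ∀ r ∈ upperBounds (quadSums T φ (T / 2 ^ N)),
        (2 ^ N / T) * ∫ t in (0 : ℝ)..(T - T / 2 ^ N), (φ (t + T / 2 ^ N) - φ t) ^ 2 ≤ r :=
  dyadic_time_average_tendsto_quadVar_general T hT φ hφc q hq
end
end
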